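/- If φ_n ∈ 𝓒 w-converges to φ ∈ L²(E, ν), then liminf_{n→∞} ⟨φ_n, φ_n⟩_n ≥ ⟨φ, φ⟩. -/

import Mathlib

/-
A real `liminf` of a sequence tending to `+∞` is the junk value `0`, so one first excludes
`⟨φ n, φ n⟩ₙ → ∞`: otherwise glue the functions `φ n / ⟨φ n, φ n⟩ₙ` along the disjoint carriers
`E n` of the measures `ν n`, putting `0` on the carrier of `ν`. The result lies in `𝓒`, since its
`ν n`-norm is `1 / ⟨φ n, φ n⟩ₙ → 0`, yet it pairs to `1` with `φ n` and to `0` with `φ`,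
contradicting `w`-convergence. Then, for `ψ ∈ 𝓕` close to `φ` in `L²(E, ν)`,
`⟨φ n, φ n⟩ₙ ≥ 2 ⟨φ n, ψ⟩ₙ - ⟨ψ, ψ⟩ₙ → 2 ⟨φ, ψ⟩ - ⟨ψ, ψ⟩ = ⟨φ, φ⟩ - ‖φ - ψ‖²`,
where the limit exists because `𝓕 ⊆ 𝓒` by polarization.
-/

open MeasureTheory Filter Topology

noncomputable section

namespace Mosco

variable {E : Type*} [MeasurableSpace E]

/-- The inner product of two real-valued functions with respect to a measure,
`⟨φ, ψ⟩ = ∫ φ ψ dμ`. -/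
def ip (μ : Measure E) (φ ψ : E → ℝ) : ℝ := ∫ x, φ x * ψ x ∂μ

/-- The framework of Section 2.1: mutually singular probability measures `ν n`, `n : ℕ`
(`ν 0` playing the role of the limit measure `ν`), such that `L²(E, ν 0)` is separable,
together with disjoint sets `En n` carrying `ν n`, and a linear subset `F = 𝓕 ⊆ 𝓓`
which is dense in `L²(E, ν 0)`. -/
structure Frame (E : Type*) [MeasurableSpace E] where
  ν : ℕ → Measure E
  prob : ∀ n, IsProbabilityMeasure (ν n)
  singular : ∀ m n, m ≠ n → (ν m).MutuallySingular (ν n)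
  separableL2 : TopologicalSpace.SeparableSpace (Lp ℝ 2 (ν 0))
  En : ℕ → Set E
  measEn : ∀ n, MeasurableSet (En n)
  disjEn : ∀ m n, m ≠ n → Disjoint (En m) (En n)
  nullEn : ∀ n, ν n (En n)ᶜ = 0
  F : Set (E → ℝ)
  F_measurable : ∀ φ ∈ F, Measurable φ
  F_memL2 : ∀ φ ∈ F, ∀ n, MemLp φ 2 (ν n)
  F_tendsto : ∀ φ ∈ F, Tendsto (fun n => ip (ν n) φ φ) atTop (𝓝 (ip (ν 0) φ φ))
  F_linear : ∀ φ ∈ F, ∀ ψ ∈ F, ∀ a b : ℝ, (fun x => a * φ x + b * ψ x) ∈ F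
  F_dense : ∀ f : E → ℝ, Measurable f → MemLp f 2 (ν 0) → ∀ ε : ℝ, 0 < ε →
    ∃ φ ∈ F, ip (ν 0) (fun x => f x - φ x) (fun x => f x - φ x) < ε

/-- The set `𝓓`: everywhere defined measurable functions lying in every `L²(E, ν n)`
whose `ν n`-norms converge to the `ν 0`-norm. -/
def Frame.D (fr : Frame E) : Set (E → ℝ) :=
  {φ | Measurable φ ∧ (∀ n, MemLp φ 2 (fr.ν n)) ∧
    Tendsto (fun n => ip (fr.ν n) φ φ) atTop (𝓝 (ip (fr.ν 0) φ φ))}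

/-- The set `𝓒`: elements of `𝓓` satisfying conditions (c1) and (c2). -/
def Frame.C (fr : Frame E) : Set (E → ℝ) :=
  {φ | φ ∈ fr.D ∧ (∀ n, 1 ≤ n → ∃ g ∈ fr.F, φ =ᵐ[fr.ν n] g) ∧
    ∀ ψ ∈ fr.F, Tendsto (fun n => ip (fr.ν n) φ ψ) atTop (𝓝 (ip (fr.ν 0) φ ψ))}

/-- The set `𝓥` of multipliers mapping `𝓓` into `𝓓` and `𝓕` into `𝓕`. -/
def Frame.V (fr : Frame E) : Set (E → ℝ) :=
  {ψ | Measurable ψ ∧ (∀ n, MemLp ψ 2 (fr.ν n)) ∧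
    (∀ σ ∈ fr.D, (fun x => σ x * ψ x) ∈ fr.D) ∧
    (∀ τ ∈ fr.F, (fun x => τ x * ψ x) ∈ fr.F)}

/-- `w`-convergence of a sequence `φs` (with `φs n` regarded as an element of
`L²(E, ν n)`) to `φ ∈ L²(E, ν 0)`. -/
def Frame.WConv (fr : Frame E) (φs : ℕ → E → ℝ) (φ : E → ℝ) : Prop :=
  ∀ ψ ∈ fr.C, Tendsto (fun n => ip (fr.ν n) (φs n) ψ) atTop (𝓝 (ip (fr.ν 0) φ ψ))

/-- `s`-convergence: `w`-convergence together with convergence of the norms. -/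
def Frame.SConv (fr : Frame E) (φs : ℕ → E → ℝ) (φ : E → ℝ) : Prop :=
  fr.WConv φs φ ∧
  Tendsto (fun n => ip (fr.ν n) (φs n) (φs n)) atTop (𝓝 (ip (fr.ν 0) φ φ))

theorem _root_.Filter.tendsto_atTop_of_not_isCoboundedUnder_ge {ι α : Type*} [LinearOrder α]
    {l : Filter ι} {u : ι → α} (h : ¬ IsCoboundedUnder (· ≥ ·) l u) : Tendsto u l atTop := by
  refine tendsto_atTop.2 fun b => ?_
  by_contra hb
  exact h (.of_frequently_le (a := b) ((not_eventually.1 hb).mono fun _ hn => (not_le.1 hn).le))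

theorem _root_.MeasureTheory.exists_measurable_forall_ae_eq {ι α β : Type*} [Countable ι]
    [Nonempty ι] [MeasurableSpace α] [MeasurableSpace β] {t : ι → Set α}
    (ht : ∀ i, MeasurableSet (t i)) (hdisj : Pairwise fun i j => Disjoint (t i) (t j))
    {μ : ι → Measure α} (hμ : ∀ i, μ i (t i)ᶜ = 0) {g : ι → α → β} (hg : ∀ i, Measurable (g i)) :
    ∃ f : α → β, Measurable f ∧ ∀ i, f =ᵐ[μ i] g i := by
  obtain ⟨f, hf, hfg⟩ := exists_measurable_piecewise t ht g hg
    fun i j hij x hx => ((hdisj hij).ne_of_mem hx.1 hx.2 rfl).elim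
  refine ⟨f, hf, fun i => ?_⟩
  filter_upwards [measure_eq_zero_iff_ae_notMem.1 (hμ i)] with x hx
  exact hfg i (not_not.1 hx)

section InnerProduct

variable {μ : Measure E} {f g : E → ℝ}

theorem ip_self_nonneg (μ : Measure E) (f : E → ℝ) : 0 ≤ ip μ f f :=
  integral_nonneg fun _ => mul_self_nonneg _

theorem ip_congr_ae {f' g' : E → ℝ} (hf : f =ᵐ[μ] f') (hg : g =ᵐ[μ] g') :
    ip μ f g = ip μ f' g' :=
  integral_congr_ae (hf.mul hg)

theorem ip_const_mul_left (c : ℝ) : ip μ (fun x => c * f x) g = c * ip μ f g := by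
  simp only [ip, mul_assoc, integral_const_mul]

theorem ip_const_mul_right (c : ℝ) : ip μ f (fun x => c * g x) = c * ip μ f g := by
  simp only [ip, mul_left_comm (f _), integral_const_mul]

theorem ip_lincomb_self (hf : MemLp f 2 μ) (hg : MemLp g 2 μ) (a b : ℝ) :
    ip μ (fun x => a * f x + b * g x) (fun x => a * f x + b * g x)
      = a ^ 2 * ip μ f f + 2 * a * b * ip μ f g + b ^ 2 * ip μ g g := by
  have hff : Integrable (fun x => f x * f x) μ := hf.integrable_mul hf
  have hfg : Integrable (fun x => f x * g x) μ := hf.integrable_mul hg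
  have hgg : Integrable (fun x => g x * g x) μ := hg.integrable_mul hg
  calc ip μ (fun x => a * f x + b * g x) (fun x => a * f x + b * g x)
      = ∫ x, a ^ 2 * (f x * f x) + 2 * a * b * (f x * g x) + b ^ 2 * (g x * g x) ∂μ := by
        unfold ip; congr 1; ext x; ring
    _ = a ^ 2 * ip μ f f + 2 * a * b * ip μ f g + b ^ 2 * ip μ g g := by
      have hfirst : Integrable (fun x => a ^ 2 * (f x * f x) + 2 * a * b * (f x * g x)) μ :=
        (hff.const_mul _).add (hfg.const_mul _)
      rw [integral_add hfirst (hgg.const_mul _), integral_add (hff.const_mul _) (hfg.const_mul _)]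
      simp only [ip, integral_const_mul]

theorem ip_sub_self (hf : MemLp f 2 μ) (hg : MemLp g 2 μ) :
    ip μ (fun x => f x - g x) (fun x => f x - g x) = ip μ f f - 2 * ip μ f g + ip μ g g := by
  have h := ip_lincomb_self hf hg 1 (-1)
  simp only [one_mul, neg_one_mul, ← sub_eq_add_neg] at h
  rw [h]; ring

theorem two_mul_ip_sub_ip_le (hf : MemLp f 2 μ) (hg : MemLp g 2 μ) :
    2 * ip μ f g - ip μ g g ≤ ip μ f f := by
  linarith [ip_sub_self hf hg, ip_self_nonneg μ (fun x => f x - g x)]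

theorem ip_sq_le_mul (hf : MemLp f 2 μ) (hg : MemLp g 2 μ) :
    ip μ f g ^ 2 ≤ ip μ f f * ip μ g g := by
  have hquad : ∀ t : ℝ, 0 ≤ ip μ g g * (t * t) + 2 * ip μ f g * t + ip μ f f := fun t => by
    nlinarith [ip_lincomb_self hf hg 1 t, ip_self_nonneg μ (fun x => 1 * f x + t * g x)]
  have hdiscr := discrim_le_zero hquad
  rw [discrim] at hdiscr
  nlinarith

theorem tendsto_ip_of_tendsto_ip_self_zero {ι : Type*} {l : Filter ι} {μ : ι → Measure E}
    {f g : ι → E → ℝ} {c : ℝ} (hf : ∀ i, MemLp (f i) 2 (μ i)) (hg : ∀ i, MemLp (g i) 2 (μ i))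
    (hf0 : Tendsto (fun i => ip (μ i) (f i) (f i)) l (𝓝 0))
    (hgc : Tendsto (fun i => ip (μ i) (g i) (g i)) l (𝓝 c)) :
    Tendsto (fun i => ip (μ i) (f i) (g i)) l (𝓝 0) := by
  have hbound : Tendsto (fun i => √(ip (μ i) (f i) (f i) * ip (μ i) (g i) (g i))) l (𝓝 0) := by
    simpa using (hf0.mul hgc).sqrt
  exact squeeze_zero_norm (fun i => Real.abs_le_sqrt (ip_sq_le_mul (hf i) (hg i))) hbound

end InnerProduct

namespace Frame

variable (fr : Frame E)

theorem F_subset_C : fr.F ⊆ fr.C := by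
  intro ψ hψ
  refine ⟨⟨fr.F_measurable ψ hψ, fr.F_memL2 ψ hψ, fr.F_tendsto ψ hψ⟩,
    fun n _ => ⟨ψ, hψ, EventuallyEq.rfl⟩, fun τ hτ => ?_⟩
  have hpolar : ∀ n, ip (fr.ν n) ψ τ =
      (ip (fr.ν n) (fun x => 1 * ψ x + 1 * τ x) (fun x => 1 * ψ x + 1 * τ x)
        - ip (fr.ν n) (fun x => 1 * ψ x + -1 * τ x) (fun x => 1 * ψ x + -1 * τ x)) / 4 := by
    intro n
    rw [ip_lincomb_self (fr.F_memL2 ψ hψ n) (fr.F_memL2 τ hτ n),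
      ip_lincomb_self (fr.F_memL2 ψ hψ n) (fr.F_memL2 τ hτ n)]
    ring
  simp only [hpolar]
  exact ((fr.F_tendsto _ (fr.F_linear ψ hψ τ hτ 1 1)).sub
    (fr.F_tendsto _ (fr.F_linear ψ hψ τ hτ 1 (-1)))).div_const 4

theorem exists_mem_C_forall_ae_eq (gs : ℕ → E → ℝ) (hm : ∀ n, Measurable (gs n))
    (hL2 : ∀ n, MemLp (gs n) 2 (fr.ν n)) (hF : ∀ n, 1 ≤ n → ∃ g ∈ fr.F, gs n =ᵐ[fr.ν n] g)
    (h0 : gs 0 =ᵐ[fr.ν 0] 0) (hnorm : Tendsto (fun n => ip (fr.ν n) (gs n) (gs n)) atTop (𝓝 0)) :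
    ∃ ψ ∈ fr.C, ∀ n, ψ =ᵐ[fr.ν n] gs n := by
  obtain ⟨ψ, hψm, hψ⟩ :=
    exists_measurable_forall_ae_eq fr.measEn (fun m n h => fr.disjEn m n h) fr.nullEn hm
  have hL2ψ : ∀ n, MemLp ψ 2 (fr.ν n) := fun n => (hL2 n).ae_eq (hψ n).symm
  have hzero : ∀ τ, ip (fr.ν 0) ψ τ = 0 := fun τ => by
    rw [ip_congr_ae ((hψ 0).trans h0) EventuallyEq.rfl]
    simp [ip]
  have hnormψ : Tendsto (fun n => ip (fr.ν n) ψ ψ) atTop (𝓝 0) := by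
    simpa only [ip_congr_ae (hψ _) (hψ _)] using hnorm
  refine ⟨ψ, ⟨⟨hψm, hL2ψ, hzero ψ ▸ hnormψ⟩, fun n hn => ?_, fun τ hτ => ?_⟩, hψ⟩
  · obtain ⟨g, hg, hgs⟩ := hF n hn
    exact ⟨g, hg, (hψ n).trans hgs⟩
  · rw [hzero τ]
    exact tendsto_ip_of_tendsto_ip_self_zero hL2ψ (fr.F_memL2 τ hτ) hnormψ (fr.F_tendsto τ hτ)

variable {fr}

theorem not_tendsto_ip_self_atTop {φs : ℕ → E → ℝ} {φ : E → ℝ} (hφs : ∀ n, φs n ∈ fr.C)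
    (hw : fr.WConv φs φ) : ¬ Tendsto (fun n => ip (fr.ν n) (φs n) (φs n)) atTop atTop := by
  intro hu
  set u := fun n => ip (fr.ν n) (φs n) (φs n)
  set w : ℕ → ℝ := fun n => if n = 0 then 0 else (u n)⁻¹
  have hwu : ∀ᶠ n in atTop, w n * u n = 1 ∧ w n * (w n * u n) = (u n)⁻¹ := by
    filter_upwards [eventually_ne_atTop 0, hu.eventually_gt_atTop 0] with n hn hpos
    simp only [w, if_neg hn, inv_mul_cancel₀ hpos.ne', mul_one, and_self]
  obtain ⟨ψ, hψC, hψ⟩ := fr.exists_mem_C_forall_ae_eq (fun n x => w n * φs n x)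
    (fun n => ((hφs n).1.1).const_mul _) (fun n => ((hφs n).1.2.1 n).const_mul _)
    (fun n hn => by
      obtain ⟨g, hg, hφg⟩ := (hφs n).2.1 n hn
      refine ⟨fun x => w n * g x + 0 * g x, fr.F_linear g hg g hg _ _, ?_⟩
      filter_upwards [hφg] with x hx
      rw [hx, zero_mul, add_zero])
    (.of_forall fun x => by simp [w])
    (by
      refine hu.inv_tendsto_atTop.congr' ?_
      filter_upwards [hwu] with n hn
      rw [Pi.inv_apply, ip_const_mul_right, ip_const_mul_left, hn.2])
  have hone : ∀ᶠ n in atTop, ip (fr.ν n) (φs n) ψ = 1 := by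
    filter_upwards [hwu] with n hn
    rw [ip_congr_ae EventuallyEq.rfl (hψ n), ip_const_mul_right, hn.1]
  have hzero : ip (fr.ν 0) φ ψ = 0 := by
    rw [ip_congr_ae EventuallyEq.rfl (hψ 0)]
    simp [ip, w]
  exact one_ne_zero (tendsto_nhds_unique (tendsto_const_nhds.congr' (hone.mono fun _ h => h.symm))
    (hzero ▸ hw ψ hψC))

end Frame

/-- Proposition 2.3 (e): if `φs n ∈ 𝓒` `w`-converges to `φ ∈ L²(E, ν)`, then
`liminf_n ⟨φs n, φs n⟩ₙ ≥ ⟨φ, φ⟩`. -/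
theorem le_liminf_norm (fr : Frame E) (φs : ℕ → E → ℝ) (hφs : ∀ n, φs n ∈ fr.C)
    (φ : E → ℝ) (hφm : Measurable φ) (hφ2 : MemLp φ 2 (fr.ν 0)) (hw : fr.WConv φs φ) :
    ip (fr.ν 0) φ φ ≤ liminf (fun n => ip (fr.ν n) (φs n) (φs n)) atTop := by
  have hcb : IsCoboundedUnder (· ≥ ·) atTop fun n => ip (fr.ν n) (φs n) (φs n) :=
    not_imp_comm.1 tendsto_atTop_of_not_isCoboundedUnder_ge (Frame.not_tendsto_ip_self_atTop hφs hw)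
  refine le_of_forall_sub_le fun ε hε => le_liminf_of_le hcb ?_
  obtain ⟨ψ, hψ, happrox⟩ := fr.F_dense φ hφm hφ2 ε hε
  have hgap : ip (fr.ν 0) φ φ - ε < 2 * ip (fr.ν 0) φ ψ - ip (fr.ν 0) ψ ψ := by
    rw [ip_sub_self hφ2 (fr.F_memL2 ψ hψ 0)] at happrox
    linarith
  have hlim : Tendsto (fun n => 2 * ip (fr.ν n) (φs n) ψ - ip (fr.ν n) ψ ψ) atTop
      (𝓝 (2 * ip (fr.ν 0) φ ψ - ip (fr.ν 0) ψ ψ)) :=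
    ((hw ψ (fr.F_subset_C hψ)).const_mul 2).sub (fr.F_tendsto ψ hψ)
  filter_upwards [hlim.eventually (lt_mem_nhds hgap)] with n hn
  exact hn.le.trans (two_mul_ip_sub_ip_le ((hφs n).1.2.1 n) (fr.F_memL2 ψ hψ n))

end Mosco
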